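/- Let r ∈ ℕ and n ∈ ℕ_+ with n ≥ r. Then (r+1)!·L(n, r+1) = Σ_{k=1}^n C(n,k)·k·D_r(n-k), where L(n,k) = (n!/k!)·C(n-1, k-1) are the Lah numbers. -/

import Mathlib

/-!
Call a permutation *separating* for a set `S` of marked points if the points of `S` lie in
pairwise distinct cycles. Adjoining an unmarked point to a set of `N` points multiplies the
number of separating permutations by `N + 1` (the new point is fixed or inserted after one of
the old points), so on `m + r` points with `r` marked there are `(m + r)! / r!` of them.
Sorting them by their set of moved points, of which `a` are marked and `b` unmarked, gives
`(m + r)! / r! = ∑ₐ ∑_b C(r, a) C(m, b) D_a(b)`. As this holds for every `r`, binomial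
inversion against Vandermonde's identity yields `∑_b C(m, b) D_r(b) = m! C(m, r)`. The theorem
follows from `k C(n, k) = n C(n - 1, k - 1)` and `(r + 1)! L(n, r + 1) = n! C(n - 1, r)`.
-/

/-- The `r`-derangement number `D_r(n)`: the number of fixed-point-free permutations
of `n + r` elements such that the first `r` (distinguished) elements lie in pairwise
distinct cycles of the cycle decomposition. -/
noncomputable def rDerangement (r n : ℕ) : ℕ :=
  Nat.card {σ : Equiv.Perm (Fin (n + r)) //
    (∀ x, σ x ≠ x) ∧
    ∀ i j : Fin (n + r), (i : ℕ) < r → (j : ℕ) < r → i ≠ j → ¬ σ.SameCycle i j}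

/-- The Lah number `L(n,k) = (n!/k!) * C(n-1, k-1)` (as a rational number). -/
def lah (n k : ℕ) : ℚ :=
  (n.factorial : ℚ) / k.factorial * (n - 1).choose (k - 1)

open Finset
open scoped Nat

theorem sum_finset_apply_card_inter_card_sdiff {α M : Type*} [AddCommMonoid M] [Fintype α]
    [DecidableEq α] (S : Finset α) (f : ℕ → ℕ → M) :
    ∑ U : Finset α, f #(U ∩ S) #(U \ S) =
      ∑ a ∈ range (#S + 1), ∑ b ∈ range (#Sᶜ + 1), ((#S).choose a * (#Sᶜ).choose b) • f a b := by
  calc ∑ U : Finset α, f #(U ∩ S) #(U \ S)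
      = ∑ A ∈ S.powerset, ∑ B ∈ Sᶜ.powerset, f #A #B := by
        rw [← sum_product']
        refine sum_nbij' (fun U => (U ∩ S, U \ S)) (fun p => p.1 ∪ p.2) ?_ ?_ ?_ ?_ ?_
        · simp [subset_iff]
        · simp
        · intro U _
          ext x
          simp only [mem_union, mem_inter, mem_sdiff]
          tauto
        · simp only [mem_product, mem_powerset, subset_iff, mem_compl]
          rintro ⟨A, B⟩ ⟨hA, hB⟩
          ext x <;> grind
        · simp
    _ = _ := by
        rw [sum_powerset_apply_card (fun a => ∑ B ∈ Sᶜ.powerset, f a #B)]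
        simp only [sum_powerset_apply_card, smul_sum, smul_smul]

theorem eq_of_forall_sum_choose_smul_eq {M : Type*} [AddCancelCommMonoid M] {x y : ℕ → M}
    (h : ∀ r, ∑ a ∈ range (r + 1), r.choose a • x a = ∑ a ∈ range (r + 1), r.choose a • y a) :
    x = y := by
  funext r
  induction r using Nat.strong_induction_on with
  | _ r ih =>
    have hr := h r
    rw [sum_range_succ, sum_range_succ, Nat.choose_self, one_smul, one_smul,
      sum_congr rfl fun a ha => by rw [ih a (mem_range.1 ha)]] at hr
    exact add_left_cancel hr

theorem sum_range_choose_mul_choose (r m : ℕ) :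
    ∑ a ∈ range (r + 1), r.choose a * m.choose a = (m + r).choose r := by
  rw [Nat.add_choose_eq, Nat.sum_antidiagonal_eq_sum_range_succ_mk]
  exact sum_congr rfl fun a ha => by
    rw [Nat.choose_symm (Nat.le_of_lt_succ (mem_range.1 ha)), mul_comm]

theorem sum_Icc_choose_mul_mul (m : ℕ) (f : ℕ → ℕ) :
    ∑ k ∈ Icc 1 (m + 1), (m + 1).choose k * k * f (m + 1 - k) =
      (m + 1) * ∑ b ∈ range (m + 1), m.choose b * f b := by
  rw [← Ico_add_one_right_eq_Icc, sum_Ico_eq_sum_range, ← sum_range_reflect, mul_sum]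
  refine sum_congr (by simp) fun b hb => ?_
  rw [mem_range] at hb
  rw [show m + 1 + 1 - 1 - 1 - b = m - b by omega, show m + 1 - (1 + (m - b)) = b by omega,
    add_comm 1, ← Nat.add_one_mul_choose_eq, Nat.choose_symm (by omega), mul_assoc]

theorem exists_equiv_preimage_eq {α β : Type*} [Finite α] [Finite β] {s : Set α} {t : Set β}
    (h : Nat.card s = Nat.card t) (hc : Nat.card ↥sᶜ = Nat.card ↥tᶜ) :
    ∃ e : α ≃ β, e ⁻¹' t = s := by
  classical
  obtain ⟨e₁⟩ := Finite.card_eq.1 h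
  obtain ⟨e₂⟩ := Finite.card_eq.1 hc
  refine ⟨(Equiv.sumCompl (· ∈ s)).symm.trans
    ((Equiv.sumCongr e₁ e₂).trans (Equiv.sumCompl (· ∈ t))), ?_⟩
  ext x
  by_cases hx : x ∈ s
  · simp only [Set.mem_preimage, Equiv.trans_apply, Equiv.sumCompl_symm_apply_of_pos hx, hx,
      iff_true]
    exact (e₁ ⟨x, hx⟩).2
  · simp only [Set.mem_preimage, Equiv.trans_apply, Equiv.sumCompl_symm_apply_of_neg hx, hx,
      iff_false]
    exact (e₂ ⟨x, hx⟩).2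

namespace Equiv.Perm

variable {α β : Type*}

theorem SameCycle.map_of_forall {σ : Perm α} {τ : Perm β} {f : α → β}
    (hf : ∀ x, τ.SameCycle (f x) (f (σ x))) {x y : α} (h : σ.SameCycle x y) :
    τ.SameCycle (f x) (f y) := by
  obtain ⟨k, rfl⟩ := h
  induction k using Int.induction_on with
  | zero => exact .refl _ _
  | succ i ih => rw [add_comm, zpow_add, zpow_one, mul_apply]; exact ih.trans (hf _)
  | pred i ih =>
    have h := hf ((σ ^ (-(i : ℤ) - 1)) x)
    rw [← mul_apply, ← zpow_one_add, add_sub_cancel] at h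
    exact ih.trans h.symm

theorem sameCycle_permCongr_iff (e : α ≃ β) (σ : Perm α) {x y : α} :
    (e.permCongr σ).SameCycle (e x) (e y) ↔ σ.SameCycle x y := by
  refine ⟨fun h => ?_, .map_of_forall fun _ => ⟨1, by simp [permCongr_apply]⟩⟩
  simpa using h.map_of_forall (f := e.symm) fun _ => ⟨1, by simp [permCongr_apply]⟩

theorem sameCycle_removeNone_iff (σ : Perm (Option α)) {a b : α} :
    SameCycle (removeNone σ) a b ↔ σ.SameCycle (some a) (some b) := by
  refine ⟨.map_of_forall fun c => ?_, fun h => ?_⟩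
  · rcases hc : σ (some c) with _ | d
    · rw [removeNone_none σ hc, ← hc]
      exact (SameCycle.refl _ _).apply_right.apply_right
    · rw [removeNone_some σ ⟨d, hc⟩]
      exact (SameCycle.refl _ _).apply_right
  -- contract `none` onto its successor: every `σ`-step becomes a `removeNone σ`-step
  refine h.map_of_forall (τ := removeNone σ) (f := fun y => y.getD ((σ none).getD a)) fun y => ?_
  rcases y with _ | c
  · rcases σ none <;> exact .refl _ _
  · rcases hc : σ (some c) with _ | d
    · simp only [Option.getD_some, Option.getD_none, ← removeNone_none σ hc]
      exact (SameCycle.refl _ _).apply_right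
    · simp only [Option.getD_some]
      rw [← Option.some_injective _ ((removeNone_some σ ⟨d, hc⟩).trans hc)]
      exact (SameCycle.refl _ _).apply_right

theorem sameCycle_ofSubtype_iff {p : α → Prop} [DecidablePred p] (τ : Perm (Subtype p))
    {x y : Subtype p} : (ofSubtype τ).SameCycle x y ↔ τ.SameCycle x y := by
  rw [← sameCycle_subtypePerm (h := ofSubtype_apply_mem_iff_mem τ), subtypePerm_ofSubtype]

def Separates (σ : Perm α) (s : Set α) : Prop :=
  s.Pairwise fun i j => ¬σ.SameCycle i j

theorem separates_permCongr_iff (e : α ≃ β) (σ : Perm α) (s : Set β) :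
    (e.permCongr σ).Separates s ↔ σ.Separates (e ⁻¹' s) := by
  conv_lhs => rw [← e.image_preimage s]
  rw [Separates, e.injective.injOn.pairwise_image]
  unfold Function.onFun
  simp only [sameCycle_permCongr_iff, Separates]

theorem separates_image_some_iff (σ : Perm (Option α)) (s : Set α) :
    σ.Separates (some '' s) ↔ Separates (removeNone σ) s := by
  simp only [Separates, (Option.some_injective α).injOn.pairwise_image, sameCycle_removeNone_iff]

theorem separates_ofSubtype_iff {p : α → Prop} [DecidablePred p] (τ : Perm (Subtype p))
    (s : Set α) : (ofSubtype τ).Separates s ↔ τ.Separates (Subtype.val ⁻¹' s) := by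
  refine ⟨fun h x hx y hy hxy => ?_, fun h i hi j hj hij hij' => ?_⟩
  · exact fun hc => h hx hy (Subtype.val_injective.ne hxy) ((sameCycle_ofSubtype_iff τ).2 hc)
  -- points outside `p` are fixed, hence alone in their cycle
  by_cases hpi : p i
  · by_cases hpj : p j
    · exact h (x := ⟨i, hpi⟩) hi (y := ⟨j, hpj⟩) hj (by simpa using hij)
        ((sameCycle_ofSubtype_iff τ).1 hij')
    · exact hij (hij'.eq_of_right (ofSubtype_apply_of_not_mem τ hpj))
  · exact hij (hij'.eq_of_left (ofSubtype_apply_of_not_mem τ hpi))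

theorem separates_univ_iff (σ : Perm α) : σ.Separates .univ ↔ σ = 1 := by
  refine ⟨fun h => ext fun x => by_contra fun hx => ?_, fun h => ?_⟩
  · exact h (Set.mem_univ _) (Set.mem_univ x) hx (SameCycle.refl _ _).apply_right.symm
  · subst h
    exact fun i _ j _ hij h => hij (sameCycle_one.1 h)

theorem card_separates_eq_card_mul [Finite α] [DecidableEq α] {s : Set α} {a : α} (ha : a ∉ s) :
    Nat.card {σ : Perm α // σ.Separates s} =
      Nat.card α * Nat.card {σ : Perm {b // b ≠ a} // σ.Separates (Subtype.val ⁻¹' s)} := by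
  set e := optionSubtypeNe a
  have hs : e ⁻¹' s = some '' (Subtype.val ⁻¹' s) := by
    ext (_ | b) <;> simp [e, ha]
  calc Nat.card {σ : Perm α // σ.Separates s}
      = Nat.card {σ : Perm (Option {b // b ≠ a}) // σ.Separates (some '' (Subtype.val ⁻¹' s))} :=
        Nat.card_congr (e.permCongr.subtypeEquiv fun σ => by
          rw [separates_permCongr_iff, hs]).symm
    -- `decomposeOption σ = (σ none, removeNone σ)`
    _ = Nat.card {x : Option {b // b ≠ a} × Perm {b // b ≠ a} //
          x.2.Separates (Subtype.val ⁻¹' s)} :=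
        Nat.card_congr (decomposeOption.subtypeEquiv fun σ => separates_image_some_iff σ _)
    _ = Nat.card (Option {b // b ≠ a} ×
          {σ : Perm {b // b ≠ a} // σ.Separates (Subtype.val ⁻¹' s)}) :=
        Nat.card_congr { toFun x := (x.1.1, ⟨x.1.2, x.2⟩), invFun y := ⟨(y.1, y.2.1), y.2.2⟩ }
    _ = _ := by rw [Nat.card_prod, Nat.card_congr e]

theorem card_separates_mul_factorial [Finite α] (s : Set α) :
    Nat.card {σ : Perm α // σ.Separates s} * (Nat.card s)! = (Nat.card α)! := by
  classical
  obtain ⟨m, hm⟩ : ∃ m, Nat.card α = Nat.card s + m :=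
    ⟨_, (Nat.add_sub_of_le (Finite.card_subtype_le _)).symm⟩
  induction m generalizing α with
  | zero =>
    obtain rfl : s = .univ := Set.eq_of_subset_of_ncard_le (Set.subset_univ s)
      (by simp only [Set.ncard_univ]; exact hm.le)
    simp [separates_univ_iff]
  | succ m ih =>
    obtain ⟨a, ha⟩ : ∃ a, a ∉ s := by
      by_contra! h
      rw [Set.eq_univ_of_forall h, Nat.card_univ] at hm
      omega
    have hcard : Nat.card α = Nat.card {b // b ≠ a} + 1 := by
      rw [← Finite.card_option, Nat.card_congr (optionSubtypeNe a)]
    have hs : Nat.card (Subtype.val ⁻¹' s : Set {b // b ≠ a}) = Nat.card s :=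
      Nat.card_preimage_of_injective Subtype.val_injective
        fun x hx => ⟨⟨x, fun h => ha (h ▸ hx)⟩, rfl⟩
    have ih' := ih (Subtype.val ⁻¹' s) (by omega)
    rw [hs] at ih'
    rw [card_separates_eq_card_mul ha, mul_assoc, ih', hcard, Nat.factorial_succ]

section Support

variable [Fintype α] [DecidableEq α]

theorem card_separates_support_eq (s : Set α) (U : Finset α) :
    Nat.card {σ : Perm α // σ.Separates s ∧ σ.support = U} =
      Nat.card {τ : Perm U // τ ∈ derangements U ∧ τ.Separates (Subtype.val ⁻¹' s)} := by
  have hU (σ : Perm α) : σ.support = U ↔ ∀ a, a ∉ U ↔ a ∈ Function.fixedPoints σ := by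
    simp [Finset.ext_iff, Function.IsFixedPt, not_iff_comm]
  symm
  calc Nat.card {τ : Perm U // τ ∈ derangements U ∧ τ.Separates (Subtype.val ⁻¹' s)}
      = Nat.card {τ : derangements U // (τ : Perm U).Separates (Subtype.val ⁻¹' s)} :=
        Nat.card_congr (subtypeSubtypeEquivSubtypeInter _ _).symm
    _ = Nat.card {σ : {σ : Perm α // ∀ a, a ∉ U ↔ a ∈ Function.fixedPoints σ} //
          (σ : Perm α).Separates s} :=
        Nat.card_congr ((derangements.subtypeEquiv _).subtypeEquiv fun τ =>
          (separates_ofSubtype_iff _ s).symm)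
    _ = Nat.card {σ : Perm α // σ.Separates s ∧ σ.support = U} :=
        Nat.card_congr ((subtypeSubtypeEquivSubtypeInter
          (fun σ : Perm α => ∀ a, a ∉ U ↔ a ∈ Function.fixedPoints σ) (Separates · s)).trans
          (subtypeEquivRight fun σ => by rw [hU, and_comm]))

theorem card_separates_eq_sum (s : Set α) :
    Nat.card {σ : Perm α // σ.Separates s} =
      ∑ U : Finset α,
        Nat.card {τ : Perm U // τ ∈ derangements U ∧ τ.Separates (Subtype.val ⁻¹' s)} := by
  rw [← Nat.card_congr (sigmaFiberEquiv fun σ : {σ : Perm α // σ.Separates s} => σ.1.support),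
    Nat.card_sigma]
  refine sum_congr rfl fun U _ => ?_
  rw [← card_separates_support_eq]
  exact Nat.card_congr (subtypeSubtypeEquivSubtypeInter (Separates · s) (support · = U))

end Support

end Equiv.Perm

open Equiv Equiv.Perm

theorem rDerangement_eq_card (r n : ℕ) :
    rDerangement r n = Nat.card {σ : Perm (Fin (n + r)) //
      σ ∈ derangements _ ∧ σ.Separates {i | (i : ℕ) < r}} :=
  Nat.card_congr <| subtypeEquivRight fun _ =>
    and_congr Iff.rfl ⟨fun h _ hi _ hj => h _ _ hi hj, fun h _ _ hi hj => h hi hj⟩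

theorem card_derangements_separates {α : Type*} [Finite α] (s : Set α) :
    Nat.card {σ : Perm α // σ ∈ derangements α ∧ σ.Separates s} =
      rDerangement (Nat.card s) (Nat.card α - Nat.card s) := by
  set r := Nat.card s
  set n := Nat.card α - r
  set t : Set (Fin (n + r)) := {i | (i : ℕ) < r}
  have hα : Nat.card α = n + r := by have : r ≤ Nat.card α := s.ncard_le_card; omega
  have ht : Nat.card t = r :=
    Nat.card_eq_fintype_card.trans (Fintype.card_fin_lt_of_le (Nat.le_add_left r n))
  have hc : Nat.card ↥sᶜ = Nat.card ↥tᶜ := by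
    change sᶜ.ncard = tᶜ.ncard
    rw [Set.ncard_compl, Set.ncard_compl]
    change Nat.card α - r = Nat.card (Fin (n + r)) - Nat.card t
    rw [ht, Nat.card_fin, hα]
  obtain ⟨e, he⟩ := exists_equiv_preimage_eq ht.symm hc
  rw [rDerangement_eq_card]
  exact Nat.card_congr (e.permCongr.subtypeEquiv fun σ => and_congr
    (by simp [derangements, permCongr_apply, e.symm.forall_congr_left])
    (by rw [separates_permCongr_iff, he]))

theorem card_separates_eq_sum_rDerangement {α : Type*} [Fintype α] [DecidableEq α]
    (S : Finset α) :
    Nat.card {σ : Perm α // σ.Separates S} =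
      ∑ a ∈ range (#S + 1), ∑ b ∈ range (#Sᶜ + 1),
        (#S).choose a * (#Sᶜ).choose b * rDerangement a b := by
  have hU (U : Finset α) :
      Nat.card {τ : Perm U // τ ∈ derangements U ∧ τ.Separates (Subtype.val ⁻¹' S)} =
        rDerangement #(U ∩ S) #(U \ S) := by
    have hS : Nat.card (Subtype.val ⁻¹' (S : Set α) : Set U) = #(U ∩ S) := by
      rw [← Nat.card_eq_finsetCard]
      exact Nat.card_congr ((subtypeSubtypeEquivSubtypeInter (· ∈ U) (· ∈ S)).trans
        (subtypeEquivRight fun _ => mem_inter.symm))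
    rw [card_derangements_separates, hS, Nat.card_eq_finsetCard, ← card_sdiff_add_card_inter U S,
      Nat.add_sub_cancel]
  rw [card_separates_eq_sum]
  simp_rw [hU]
  exact sum_finset_apply_card_inter_card_sdiff S rDerangement

theorem sum_choose_mul_rDerangement (r m : ℕ) :
    ∑ b ∈ range (m + 1), m.choose b * rDerangement r b = m ! * m.choose r := by
  suffices h : (fun a => ∑ b ∈ range (m + 1), m.choose b * rDerangement a b) =
      fun a => m ! * m.choose a from congrFun h r
  refine eq_of_forall_sum_choose_smul_eq fun k =>
    Nat.eq_of_mul_eq_mul_right (Nat.factorial_pos k) ?_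
  let S : Finset (Fin k ⊕ Fin m) := univ.map .inl
  have hS : #S = k := by simp [S]
  have hSc : #Sᶜ = m := by rw [card_compl, hS]; simp
  have hcount := card_separates_mul_factorial (S : Set (Fin k ⊕ Fin m))
  rw [Nat.card_coe_set_eq, Set.ncard_coe_finset, hS, Nat.card_sum, Nat.card_fin, Nat.card_fin,
    card_separates_eq_sum_rDerangement, hS, hSc] at hcount
  calc _ = (∑ a ∈ range (k + 1), ∑ b ∈ range (m + 1),
          k.choose a * m.choose b * rDerangement a b) * k ! := by
        simp only [smul_eq_mul, mul_sum, mul_assoc]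
    _ = (m + k).choose k * m ! * k ! := by
        rw [hcount, Nat.add_choose_mul_factorial_mul_factorial, add_comm]
    _ = _ := by
        rw [← sum_range_choose_mul_choose]
        simp only [smul_eq_mul, sum_mul]
        exact sum_congr rfl fun _ _ => by ring

theorem lah_eq_sum_rDerangement_general (r n : ℕ) (hn : 0 < n) :
    ((r + 1).factorial : ℚ) * lah n (r + 1) =
      ∑ k ∈ Finset.Icc 1 n, (n.choose k : ℚ) * k * rDerangement r (n - k) := by
  obtain ⟨m, rfl⟩ : ∃ m, n = m + 1 := ⟨n - 1, by omega⟩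
  have hsum := sum_Icc_choose_mul_mul m (rDerangement r)
  rw [sum_choose_mul_rDerangement, ← mul_assoc, ← Nat.factorial_succ] at hsum
  have hlah : ((r + 1)! : ℚ) * lah (m + 1) (r + 1) = ((m + 1)! * m.choose r : ℕ) := by
    rw [lah, Nat.add_sub_cancel, Nat.add_sub_cancel]
    push_cast
    field_simp
  rw [hlah]
  exact_mod_cast hsum.symm

theorem lah_eq_sum_rDerangement (r n : ℕ) (hn : 0 < n) (hrn : r ≤ n) :
    ((r + 1).factorial : ℚ) * lah n (r + 1) =
      ∑ k ∈ Finset.Icc 1 n, (n.choose k : ℚ) * k * rDerangement r (n - k) :=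
  lah_eq_sum_rDerangement_general r n hn
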